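/- Consider a finite-state Markov chain with disjoint sets U (forbidden) and E (target), and suppose the hitting time τ = τ_{U∪E} of U ∪ E is almost surely finite from state x ∉ U ∪ E. Then the safety probability S(x) = P_x[τ_U < τ_E] equals the expected sum E_x[∑_{t=0}^{τ-1} κ(X_t)], where κ(y) = ∑_{z ∈ U} p(y,z) is the one-step probability of jumping into U from y. -/

import Mathlib

open MeasureTheory Set Filter
open scoped ENNReal

noncomputable section

/-- First hitting time of a set `A` along the path `ω`, valued in `ℕ∞`
(`⊤` if the path never visits `A`). -/
def hit {X : Type*} (A : Set X) (ω : ℕ → X) : ℕ∞ :=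
  sInf ((fun n : ℕ => (n : ℕ∞)) '' {n | ω n ∈ A})

/-- `P` is the family of path measures of a time-homogeneous Markov chain with
one-step transition kernel `p`, where `P x` is the law of the chain started at `x`. -/
def IsMarkovChain {X : Type*} [MeasurableSpace X] [DecidableEq X]
    (P : X → Measure (ℕ → X)) (p : X → X → ℝ≥0∞) : Prop :=
  (∀ x, IsProbabilityMeasure (P x)) ∧
  (∀ x y, P x {ω | ω 0 = y} = if y = x then 1 else 0) ∧
  (∀ x (n : ℕ) (s : ℕ → X),
    P x {ω | ∀ i ≤ n + 1, ω i = s i}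
      = P x {ω | ∀ i ≤ n, ω i = s i} * p (s n) (s (n + 1)))

/-!
Split the event `{τ_U < τ_E}` according to the time `t + 1` at which the chain first enters
`U ∪ E`, necessarily through `U`; since `X₀ = x ∉ U`, up to a null set this is the disjoint union
of the events `{t < τ} ∩ {X_{t+1} ∈ U}`. The event `{t < τ}` is determined by `X₀, …, X_t`, so by
the Markov property `P_x[t < τ, X_{t+1} ∈ U] = E_x[κ(X_t); t < τ]`, and summing over `t` gives
the claim. Measurability is free: the initial laws `P y {ω | ω 0 = ·} = δ_y` force the σ-algebra
on the finite state space to be discrete.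
-/

section Hit

variable {X : Type*} {A B : Set X} {ω : ℕ → X}

lemma hit_lt_iff {m : ℕ∞} : hit A ω < m ↔ ∃ n : ℕ, ω n ∈ A ∧ (n : ℕ∞) < m := by
  simp [hit, sInf_lt_iff]

lemma lt_hit_iff {t : ℕ} : (t : ℕ∞) < hit A ω ↔ ∀ i ≤ t, ω i ∉ A := by
  rw [← not_iff_not, not_lt, ← ENat.lt_add_one_iff (ENat.natCast_ne_top t), hit_lt_iff]
  push Not
  norm_cast
  simp only [Nat.lt_succ_iff]
  exact exists_congr fun n => and_comm

lemma dependsOn_lt_hit (A : Set X) (t : ℕ) :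
    DependsOn (· ∈ {ω : ℕ → X | (t : ℕ∞) < hit A ω}) (Iic t) := by
  intro ω ω' h
  simp only [mem_ofPred_eq, lt_hit_iff, eq_iff_iff]
  exact forall₂_congr fun i hi => by rw [h i hi]

lemma hit_lt_hit_iff (hAB : Disjoint A B) (h0 : ω 0 ∉ A) :
    hit A ω < hit B ω ↔ ∃ t : ℕ, (t : ℕ∞) < hit (A ∪ B) ω ∧ ω (t + 1) ∈ A := by
  classical
  simp only [hit_lt_iff (A := A), lt_hit_iff, mem_union, not_or]
  constructor
  · intro h
    obtain ⟨hA, hB⟩ := Nat.find_spec h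
    obtain ⟨t, ht⟩ := Nat.exists_eq_add_one_of_ne_zero (fun h' => h0 (h' ▸ hA))
    refine ⟨t, fun i hi => ⟨fun hiA => ?_, hB i (by omega)⟩, ht ▸ hA⟩
    have := Nat.find_min' h ⟨hiA, fun j hj => hB j (by omega)⟩
    omega
  · rintro ⟨t, h, hA⟩
    refine ⟨t + 1, hA, fun i hi hiB => ?_⟩
    rcases Nat.lt_or_eq_of_le hi with hi | rfl
    · exact (h i (by omega)).2 hiB
    · exact hAB.notMem_of_mem_left hA hiB

lemma pairwise_disjoint_lt_hit_inter_mem (hAB : A ⊆ B) :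
    Pairwise (Function.onFun Disjoint fun t : ℕ =>
      {ω : ℕ → X | (t : ℕ∞) < hit B ω} ∩ {ω | ω (t + 1) ∈ A}) := by
  refine (pairwise_disjoint_on _).2 fun t t' htt' => disjoint_left.2 ?_
  rintro ω ⟨-, hA⟩ ⟨h, -⟩
  exact lt_hit_iff.1 h (t + 1) htt' (hAB hA)

end Hit

lemma measurable_domRestrict {ι : Type*} {X : ι → Type*} [∀ i, MeasurableSpace (X i)]
    (s : Set ι) : Measurable (s.domRestrict (π := X)) :=
  measurable_pi_lambda _ fun _ => measurable_pi_apply _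

lemma DependsOn.measurableSet {ι : Type*} {X : ι → Type*} [∀ i, MeasurableSpace (X i)]
    [∀ i, Countable (X i)] [∀ i, MeasurableSingletonClass (X i)] {s : Set ι} (hs : s.Finite)
    {A : Set (∀ i, X i)} (hA : DependsOn (· ∈ A) s) : MeasurableSet A := by
  have := hs.to_subtype
  convert (MeasurableSet.of_discrete (s := s.domRestrict '' A)).preimage (measurable_domRestrict s)
  ext ω
  refine ⟨fun hω => ⟨ω, hω, rfl⟩, ?_⟩
  rintro ⟨ω', hω', hr'⟩
  exact (hA fun i hi => congrFun hr' ⟨i, hi⟩).mp hω'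

lemma measurableSet_lt_hit {X : Type*} [MeasurableSpace X] [Countable X]
    [MeasurableSingletonClass X] (A : Set X) (t : ℕ) :
    MeasurableSet {ω : ℕ → X | (t : ℕ∞) < hit A ω} :=
  (dependsOn_lt_hit A t).measurableSet (finite_Iic t)

lemma exists_measurableSet_mem_notMem_of_measure_eval {ι X : Type*} [DecidableEq ι]
    [MeasurableSpace X] {μ : Measure (ι → X)} {i : ι} {y z : X}
    (hz : μ {ω | ω i = z} = 0) (hy : μ {ω | ω i = y} ≠ 0) :
    ∃ S : Set X, MeasurableSet S ∧ z ∈ S ∧ y ∉ S := by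
  obtain ⟨T, hzT, hT, hT0⟩ := exists_measurable_superset_of_null hz
  obtain ⟨ω, hωy, hωT⟩ : ∃ ω, ω i = y ∧ ω ∉ T := by
    by_contra! h
    exact hy (measure_mono_null h hT0)
  -- the slice of `T` through `ω` along coordinate `i` contains `z` but not `y`
  refine ⟨(fun a => Function.update ω i a) ⁻¹' T, hT.preimage (measurable_update ω), ?_, ?_⟩
  · exact hzT (Function.update_self i z ω :)
  · simpa [← hωy] using hωT

namespace IsMarkovChain

variable {X : Type*} [MeasurableSpace X] [DecidableEq X] {P : X → Measure (ℕ → X)}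
  {p : X → X → ℝ≥0∞}

theorem separatesPoints (hmc : IsMarkovChain P p) : MeasurableSpace.SeparatesPoints X := by
  refine ⟨fun z y h => ?_⟩
  by_contra hzy
  have hz : P y {ω | ω 0 = z} = 0 := by rw [hmc.2.1, if_neg hzy]
  have hy : P y {ω | ω 0 = y} ≠ 0 := by simp [hmc.2.1]
  obtain ⟨S, hS, hzS, hyS⟩ := exists_measurableSet_mem_notMem_of_measure_eval hz hy
  exact hyS (h S hS hzS)

theorem discreteMeasurableSpace [Countable X] (hmc : IsMarkovChain P p) :
    DiscreteMeasurableSpace X :=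
  have := hmc.separatesPoints
  inferInstance

theorem measure_cylinder_inter_eval_succ_eq (hmc : IsMarkovChain P p) (x : X) (n : ℕ)
    (s : ℕ → X) (z : X) :
    P x ({ω | ∀ i ≤ n, ω i = s i} ∩ {ω | ω (n + 1) = z})
      = P x {ω | ∀ i ≤ n, ω i = s i} * p (s n) z := by
  have h := hmc.2.2 x n (Function.update s (n + 1) z)
  have hcyl : ∀ ω : ℕ → X,
      (∀ i ≤ n, ω i = Function.update s (n + 1) z i) ↔ ∀ i ≤ n, ω i = s i :=
    fun ω => forall₂_congr fun i hi => by rw [Function.update_of_ne (by omega)]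
  rw [Function.update_of_ne (by omega), Function.update_self] at h
  simp only [hcyl] at h
  rw [← h]
  congr 1
  ext ω
  simp only [mem_inter_iff, mem_ofPred_eq, Nat.le_succ_iff, or_imp, forall_and, forall_eq, hcyl,
    Function.update_self]

variable [MeasurableSingletonClass X]

theorem ae_eval_zero (hmc : IsMarkovChain P p) (x : X) : ∀ᵐ ω ∂P x, ω 0 = x := by
  have := hmc.1 x
  have hmeas : MeasurableSet {ω : ℕ → X | ω 0 = x} :=
    (measurableSet_singleton x).preimage (measurable_pi_apply 0)
  exact (prob_compl_eq_zero_iff hmeas).2 (by simpa using hmc.2.1 x x)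

variable [Countable X]

theorem measure_cylinder_inter_eval_succ_mem (hmc : IsMarkovChain P p) (x : X) (n : ℕ)
    (s : ℕ → X) (B : Set X) :
    P x ({ω | ∀ i ≤ n, ω i = s i} ∩ {ω | ω (n + 1) ∈ B})
      = ∫⁻ ω in {ω | ∀ i ≤ n, ω i = s i}, ∑' z : B, p (ω n) z ∂P x := by
  set C := {ω : ℕ → X | ∀ i ≤ n, ω i = s i}
  have hC : MeasurableSet C := DependsOn.measurableSet (finite_Iic n) fun ω ω' h => by
    simp only [C, mem_ofPred_eq, eq_iff_iff]
    exact forall₂_congr fun i hi => by rw [h i hi]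
  have hunion : C ∩ {ω | ω (n + 1) ∈ B} = ⋃ z : B, C ∩ {ω | ω (n + 1) = z} := by
    ext ω; simp
  calc P x (C ∩ {ω | ω (n + 1) ∈ B})
      = ∑' z : B, P x (C ∩ {ω | ω (n + 1) = z}) := by
        rw [hunion, measure_iUnion]
        · exact fun z w hzw =>
            disjoint_left.2 fun ω h h' => hzw (Subtype.ext (h.2.symm.trans h'.2))
        · exact fun z => hC.inter ((measurableSet_singleton _).preimage (measurable_pi_apply _))
    _ = ∑' z : B, P x C * p (s n) z :=
        tsum_congr fun z => hmc.measure_cylinder_inter_eval_succ_eq x n s z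
    _ = ∫⁻ _ in C, ∑' z : B, p (s n) z ∂P x := by
        rw [ENNReal.tsum_mul_left, setLIntegral_const, mul_comm]
    _ = ∫⁻ ω in C, ∑' z : B, p (ω n) z ∂P x :=
        setLIntegral_congr_fun hC fun ω hω => by rw [hω n le_rfl]

theorem measure_inter_eval_succ_mem (hmc : IsMarkovChain P p) (x : X) {n : ℕ}
    {A : Set (ℕ → X)} (hA : DependsOn (· ∈ A) (Iic n)) (B : Set X) :
    P x (A ∩ {ω | ω (n + 1) ∈ B}) = ∫⁻ ω in A, ∑' z : B, p (ω n) z ∂P x := by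
  let r : (ℕ → X) → (Iic n → X) := (Iic n).domRestrict
  set F : (Iic n → X) → Set (ℕ → X) := fun v => r ⁻¹' {v} ∩ A
  have hF : ∀ v, MeasurableSet (F v) := fun v =>
    ((measurableSet_singleton v).preimage (measurable_domRestrict _)).inter
      (hA.measurableSet (finite_Iic n))
  have hdisj : Pairwise (Function.onFun Disjoint F) := fun v w hvw =>
    ((disjoint_singleton.2 hvw).preimage r).mono inter_subset_left inter_subset_left
  have hA_eq : A = ⋃ v, F v := by
    ext ω; simp [F]
  have hpiece : ∀ v, P x (F v ∩ {ω | ω (n + 1) ∈ B}) = ∫⁻ ω in F v, ∑' z : B, p (ω n) z ∂P x := by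
    intro v
    rcases (F v).eq_empty_or_nonempty with h | ⟨ω₀, hv, hω₀⟩
    · simp [h]
    have hcyl : F v = {ω | ∀ i ≤ n, ω i = ω₀ i} := by
      ext ω
      refine ⟨fun ⟨hω, _⟩ i hi => congrFun (hω.trans hv.symm) ⟨i, hi⟩, fun h => ?_⟩
      exact ⟨(funext fun i => h i i.2 : r ω = r ω₀).trans hv, (hA h).mpr hω₀⟩
    rw [hcyl]
    exact hmc.measure_cylinder_inter_eval_succ_mem x n ω₀ B
  calc P x (A ∩ {ω | ω (n + 1) ∈ B})
      = ∑' v, P x (F v ∩ {ω | ω (n + 1) ∈ B}) := by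
        rw [hA_eq, iUnion_inter, measure_iUnion]
        · exact hdisj.mono fun v w h => h.mono inter_subset_left inter_subset_left
        · exact fun v => (hF v).inter (MeasurableSet.of_discrete.preimage (measurable_pi_apply _))
    _ = ∑' v, ∫⁻ ω in F v, ∑' z : B, p (ω n) z ∂P x := tsum_congr hpiece
    _ = ∫⁻ ω in A, ∑' z : B, p (ω n) z ∂P x := by
        rw [← lintegral_iUnion hF hdisj, ← hA_eq]

end IsMarkovChain

theorem stmt1_general {X : Type*} [Fintype X] [DecidableEq X] [MeasurableSpace X]
    (P : X → Measure (ℕ → X)) (p : X → X → ℝ≥0∞)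
    (U E : Set X) (hUE : Disjoint U E)
    (hmc : IsMarkovChain P p)
    (x : X) (hx : x ∉ U ∪ E) :
    P x {ω | hit U ω < hit E ω}
      = ∫⁻ ω, ∑' t : ℕ,
          (if (t : ℕ∞) < hit (U ∪ E) ω then ∑' z : U, p (ω t) (z : X) else 0) ∂ P x := by
  have := hmc.discreteMeasurableSpace
  have hS : {ω | hit U ω < hit E ω}
      =ᵐ[P x] ⋃ t : ℕ, {ω | (t : ℕ∞) < hit (U ∪ E) ω} ∩ {ω | ω (t + 1) ∈ U} := by
    refine eventuallyEq_set.2 ((hmc.ae_eval_zero x).mono fun ω hω => ?_)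
    simpa using hit_lt_hit_iff hUE (hω ▸ fun h => hx (Or.inl h))
  have hind : ∀ ω (t : ℕ), (if (t : ℕ∞) < hit (U ∪ E) ω then ∑' z : U, p (ω t) (z : X) else 0)
      = {ω | (t : ℕ∞) < hit (U ∪ E) ω}.indicator (fun ω => ∑' z : U, p (ω t) z) ω := by
    simp [indicator_apply]
  simp_rw [hind]
  rw [measure_congr hS, measure_iUnion (pairwise_disjoint_lt_hit_inter_mem subset_union_left)
      fun t => (measurableSet_lt_hit _ t).inter (MeasurableSet.of_discrete.preimage
        (measurable_pi_apply _)),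
    lintegral_tsum fun t => ?_]
  · refine tsum_congr fun t => ?_
    rw [hmc.measure_inter_eval_succ_mem x (dependsOn_lt_hit _ t),
      lintegral_indicator (measurableSet_lt_hit _ t)]
  · have hκ : Measurable fun y : X => ∑' z : U, p y z := .of_discrete
    exact ((hκ.comp (measurable_pi_apply t)).indicator (measurableSet_lt_hit _ t)).aemeasurable

/-- if the hitting time `τ = τ_{U ∪ E}` is a.s. finite from `x ∉ U ∪ E`,
then the safety probability `S(x) = P_x[τ_U < τ_E]` equals
`E_x[∑_{t=0}^{τ-1} κ(X_t)]` where `κ(y) = ∑_{z ∈ U} p(y,z)`. -/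
theorem stmt1 {X : Type*} [Fintype X] [DecidableEq X] [MeasurableSpace X]
    (P : X → Measure (ℕ → X)) (p : X → X → ℝ≥0∞)
    (U E : Set X) (hUE : Disjoint U E)
    (hmc : IsMarkovChain P p)
    (x : X) (hx : x ∉ U ∪ E)
    (hfin : P x {ω | hit (U ∪ E) ω < ⊤} = 1) :
    P x {ω | hit U ω < hit E ω}
      = ∫⁻ ω, ∑' t : ℕ,
          (if (t : ℕ∞) < hit (U ∪ E) ω then ∑' z : U, p (ω t) (z : X) else 0) ∂ P x :=
  stmt1_general P p U E hUE hmc x hx
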